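/- Let p and q be decreasing probability vectors in ℝ^n with p majorized by q. Then for all x ∈ ℝ: ∑ q_i F_{n-i+1:n}(x) ≤ ∑ p_i F_{n-i+1:n}(x) ≤ F(x) ≤ ∑ p_i F_{i:n}(x) ≤ ∑ q_i F_{i:n}(x). -/

import Mathlib

open MeasureTheory ProbabilityTheory Finset

/-!
Write `G i = P(X_(i) ≤ x)` for the CDFs of the order statistics at a fixed `x`. Sorting only
permutes the sample, so `∑ i, G i = ∑ j, P(X_j ≤ x) = n F(x)`, and `G` is antitone in `i`.
Chebyshev's sum inequality for the antitone weights `p` then puts `F(x)`, the plain average of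
`G`, below the `p`-average of `G` and above the `p`-average of `G ∘ rev`. Summation by parts
shows that moving from `p` to a majorizing `q` shifts weight towards small indices, which
increases the average of an antitone function and decreases that of a monotone one.
-/

/-- The `i`-th order statistic (0-indexed) of the values `X 0 ω, ..., X (n-1) ω`. -/
noncomputable def orderStat {Ω : Type*} {n : ℕ} (X : Fin n → Ω → ℝ) (i : Fin n) (ω : Ω) : ℝ :=
  X (Tuple.sort (fun j => X j ω) i) ω

section Majorization

variable {R : Type*} [CommRing R] [LinearOrder R] [IsStrictOrderedRing R]

theorem sum_range_mul_le_sum_range_mul_of_majorized {n : ℕ} {p q G : ℕ → R}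
    (hG : AntitoneOn G (Set.Iio n))
    (hpq : ∀ k < n, ∑ i ∈ range k, p i ≤ ∑ i ∈ range k, q i)
    (hsum : ∑ i ∈ range n, p i = ∑ i ∈ range n, q i) :
    ∑ i ∈ range n, p i * G i ≤ ∑ i ∈ range n, q i * G i := by
  have hparts := sum_range_by_parts G (fun i => q i - p i) n
  simp only [smul_eq_mul, sum_sub_distrib, hsum, sub_self, mul_zero, zero_sub] at hparts
  have hterm : ∀ i ∈ range (n - 1), (G (i + 1) - G i) *
      (∑ j ∈ range (i + 1), q j - ∑ j ∈ range (i + 1), p j) ≤ 0 := by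
    intro i hi
    have hi : i + 1 < n := by rw [mem_range] at hi; omega
    refine mul_nonpos_of_nonpos_of_nonneg ?_ (sub_nonneg.2 (hpq (i + 1) hi))
    exact sub_nonpos.2 (hG (Set.mem_Iio.2 (by omega)) (Set.mem_Iio.2 hi) (by omega))
  rw [← sub_nonneg, ← sum_sub_distrib]
  calc 0 ≤ ∑ i ∈ range n, G i * (q i - p i) := by
        rw [hparts, neg_nonneg]
        exact sum_nonpos hterm
    _ = ∑ i ∈ range n, (q i * G i - p i * G i) := sum_congr rfl fun i _ => by ring

theorem Fin.sum_filter_lt_eq_sum_range_extend {M : Type*} [AddCommMonoid M] {n k : ℕ}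
    (hk : k ≤ n) (f : Fin n → M) :
    ∑ i ∈ univ.filter (fun i : Fin n => (i : ℕ) < k), f i =
      ∑ i ∈ range k, Function.extend Fin.val f 0 i := by
  have hmap : (univ.filter fun i : Fin n => (i : ℕ) < k).map Fin.valEmbedding = range k := by
    ext j
    simp only [mem_map, mem_filter, mem_univ, true_and, Fin.valEmbedding_apply, mem_range]
    exact ⟨fun ⟨i, hi, hij⟩ => hij ▸ hi, fun hj => ⟨⟨j, by omega⟩, hj, rfl⟩⟩
  rw [← hmap, sum_map]
  exact sum_congr rfl fun i _ => (Fin.val_injective.extend_apply f 0 i).symm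

theorem Antitone.sum_mul_le_sum_mul_of_majorized {n : ℕ} {p q G : Fin n → R} (hG : Antitone G)
    (hpq : ∀ k : ℕ, k < n →
      ∑ i ∈ univ.filter (fun i : Fin n => (i : ℕ) < k), p i ≤
      ∑ i ∈ univ.filter (fun i : Fin n => (i : ℕ) < k), q i)
    (hsum : ∑ i, p i = ∑ i, q i) :
    ∑ i, p i * G i ≤ ∑ i, q i * G i := by
  have hext (f : Fin n → R) (i : Fin n) : Function.extend Fin.val f 0 i = f i :=
    Fin.val_injective.extend_apply f 0 i
  have hfin (f : Fin n → R) : ∑ i, f i = ∑ i ∈ range n, Function.extend Fin.val f 0 i := by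
    rw [← Fin.sum_univ_eq_sum_range (Function.extend Fin.val f 0)]
    simp only [hext]
  have hprod (f : Fin n → R) : ∑ i, f i * G i =
      ∑ i ∈ range n, Function.extend Fin.val f 0 i * Function.extend Fin.val G 0 i := by
    rw [← Fin.sum_univ_eq_sum_range (fun i => Function.extend Fin.val f 0 i *
      Function.extend Fin.val G 0 i)]
    simp only [hext]
  rw [hprod, hprod]
  refine sum_range_mul_le_sum_range_mul_of_majorized ?_ (fun k hk => ?_) ?_
  · intro a ha b hb hab
    exact hext G ⟨b, hb⟩ ▸ hext G ⟨a, ha⟩ ▸ hG (Fin.mk_le_mk.2 hab)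
  · simpa only [Fin.sum_filter_lt_eq_sum_range_extend hk.le] using hpq k hk
  · rwa [← hfin, ← hfin]

theorem Monotone.sum_mul_le_sum_mul_of_majorized {n : ℕ} {p q G : Fin n → R} (hG : Monotone G)
    (hpq : ∀ k : ℕ, k < n →
      ∑ i ∈ univ.filter (fun i : Fin n => (i : ℕ) < k), p i ≤
      ∑ i ∈ univ.filter (fun i : Fin n => (i : ℕ) < k), q i)
    (hsum : ∑ i, p i = ∑ i, q i) :
    ∑ i, q i * G i ≤ ∑ i, p i * G i := by
  simpa only [mul_neg, sum_neg_distrib, neg_le_neg_iff] using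
    hG.neg.sum_mul_le_sum_mul_of_majorized hpq hsum

end Majorization

section OrderStatistics

open scoped ENNReal

theorem Monotone.le_iff_lt_card_filter_le {α : Type*} [Preorder α] {n : ℕ} {g : Fin n → α}
    (hg : Monotone g) [DecidableLE α] (x : α) (i : Fin n) :
    g i ≤ x ↔ (i : ℕ) < #(univ.filter fun j => g j ≤ x) := by
  constructor
  · intro hi
    calc (i : ℕ) < #(Iic i) := by simp
      _ ≤ _ := card_le_card fun j hj => mem_filter.2 ⟨mem_univ j, (hg (mem_Iic.1 hj)).trans hi⟩
  · intro hi
    by_contra hx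
    have hsub : (univ.filter fun j => g j ≤ x) ⊆ Iio i := fun j hj =>
      mem_Iio.2 (lt_of_not_ge fun hij => hx ((hg hij).trans (mem_filter.1 hj).2))
    have := card_le_card hsub
    rw [Fin.card_Iio] at this
    omega

theorem sum_measure_setOf_eq_lintegral_card {Ω ι : Type*} [MeasurableSpace Ω] [Fintype ι]
    (μ : Measure Ω) (P : ι → Ω → Prop) [∀ i ω, Decidable (P i ω)]
    (hP : ∀ i, MeasurableSet {ω | P i ω}) :
    ∑ i, μ {ω | P i ω} = ∫⁻ ω, (#(univ.filter fun i => P i ω) : ℝ≥0∞) ∂μ := by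
  calc ∑ i, μ {ω | P i ω} = ∑ i, ∫⁻ ω, {ω | P i ω}.indicator 1 ω ∂μ := by
        simp only [lintegral_indicator_one (hP _)]
    _ = ∫⁻ ω, ∑ i, {ω | P i ω}.indicator 1 ω ∂μ :=
        (lintegral_finsetSum _ fun i _ => measurable_one.indicator (hP i)).symm
    _ = _ := by
        congr 1
        funext ω
        simp [Set.indicator_apply]

variable {Ω : Type*} {n : ℕ} (X : Fin n → Ω → ℝ)

theorem monotone_orderStat (ω : Ω) : Monotone fun i => orderStat X i ω :=
  Tuple.monotone_sort fun j => X j ω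

theorem card_filter_orderStat_le (ω : Ω) (x : ℝ) :
    #(univ.filter fun i => orderStat X i ω ≤ x) = #(univ.filter fun j => X j ω ≤ x) := by
  simp only [card_filter]
  exact Fintype.sum_equiv (Tuple.sort fun j => X j ω) _ _ fun _ => rfl

theorem orderStat_le_iff (i : Fin n) (ω : Ω) (x : ℝ) :
    orderStat X i ω ≤ x ↔ (i : ℕ) < #(univ.filter fun j => X j ω ≤ x) := by
  rw [(monotone_orderStat X ω).le_iff_lt_card_filter_le, card_filter_orderStat_le]

variable [MeasurableSpace Ω] {X}

theorem measurable_card_filter_le (hX : ∀ j, Measurable (X j)) (x : ℝ) :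
    Measurable fun ω => #(univ.filter fun j => X j ω ≤ x) := by
  simp only [card_filter]
  exact Finset.measurable_sum _ fun j _ =>
    Measurable.ite (hX j measurableSet_Iic) measurable_const measurable_const

theorem measurableSet_orderStat_le (hX : ∀ j, Measurable (X j)) (i : Fin n) (x : ℝ) :
    MeasurableSet {ω | orderStat X i ω ≤ x} := by
  simp only [orderStat_le_iff]
  exact measurable_card_filter_le hX x measurableSet_Ioi

theorem sum_measure_orderStat_le (μ : Measure Ω) (hX : ∀ j, Measurable (X j)) (x : ℝ) :
    ∑ i, μ {ω | orderStat X i ω ≤ x} = ∑ j, μ {ω | X j ω ≤ x} := by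
  rw [sum_measure_setOf_eq_lintegral_card μ _ fun i => measurableSet_orderStat_le hX i x,
    sum_measure_setOf_eq_lintegral_card μ (fun j ω => X j ω ≤ x) fun j => hX j measurableSet_Iic]
  simp only [card_filter_orderStat_le]

end OrderStatistics

theorem orderStat_mixture_bounds_of_majorized_general {Ω : Type*} [MeasurableSpace Ω]
    (μ : Measure Ω) [IsProbabilityMeasure μ] (n : ℕ) (hn : 0 < n)
    (X : Fin n → Ω → ℝ) (hmeas : ∀ i, Measurable (X i))
    (F : ℝ → ℝ) (hF : ∀ i x, (μ {ω | X i ω ≤ x}).toReal = F x)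
    (p q : Fin n → ℝ)
    (hpdec : ∀ i j : Fin n, i ≤ j → p j ≤ p i)
    (hpsum : ∑ i : Fin n, p i = 1) (hqsum : ∑ i : Fin n, q i = 1)
    (hmaj : ∀ k : ℕ, k < n →
      ∑ i ∈ univ.filter (fun i : Fin n => (i : ℕ) < k), p i ≤
      ∑ i ∈ univ.filter (fun i : Fin n => (i : ℕ) < k), q i) :
    ∀ x : ℝ,
      (∑ i : Fin n, q i * (μ {ω | orderStat X i.rev ω ≤ x}).toReal) ≤
        (∑ i : Fin n, p i * (μ {ω | orderStat X i.rev ω ≤ x}).toReal) ∧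
      (∑ i : Fin n, p i * (μ {ω | orderStat X i.rev ω ≤ x}).toReal) ≤ F x ∧
      F x ≤ (∑ i : Fin n, p i * (μ {ω | orderStat X i ω ≤ x}).toReal) ∧
      (∑ i : Fin n, p i * (μ {ω | orderStat X i ω ≤ x}).toReal) ≤
        ∑ i : Fin n, q i * (μ {ω | orderStat X i ω ≤ x}).toReal := by
  intro x
  set G : Fin n → ℝ := fun i => (μ {ω | orderStat X i ω ≤ x}).toReal
  have hG : Antitone G := fun i j hij => ENNReal.toReal_mono (measure_ne_top μ _)
    (measure_mono fun ω hω => (monotone_orderStat X ω hij).trans hω)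
  have hGsum : ∑ i, G i = n * F x := by
    rw [← ENNReal.toReal_sum fun i _ => measure_ne_top μ _, sum_measure_orderStat_le μ hmeas x,
      ENNReal.toReal_sum fun i _ => measure_ne_top μ _]
    simp [hF]
  have hGrev : Monotone fun i : Fin n => G i.rev := hG.comp Fin.rev_anti
  have hGrevsum : ∑ i : Fin n, G i.rev = n * F x := (Equiv.sum_comp Fin.revPerm G).trans hGsum
  have hpq : ∑ i, p i = ∑ i, q i := hpsum.trans hqsum.symm
  have hn' : (0 : ℝ) < n := Nat.cast_pos.2 hn
  refine ⟨hGrev.sum_mul_le_sum_mul_of_majorized hmaj hpq, ?_, ?_,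
    hG.sum_mul_le_sum_mul_of_majorized hmaj hpq⟩
  · have hcheb := (Antitone.antivary hpdec hGrev).card_mul_sum_le_sum_mul_sum
    rw [Fintype.card_fin, hpsum, one_mul, hGrevsum] at hcheb
    exact le_of_mul_le_mul_left hcheb hn'
  · have hcheb := (Antitone.monovary hpdec hG).sum_mul_sum_le_card_mul_sum
    rw [Fintype.card_fin, hpsum, one_mul, hGsum] at hcheb
    exact le_of_mul_le_mul_left hcheb hn'

/-- Corollary: if `p ≺ q` are decreasing probability vectors, then the `q`-mixture
bounds are wider than the `p`-mixture bounds around `F`. -/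
theorem orderStat_mixture_bounds_of_majorized {Ω : Type*} [MeasurableSpace Ω]
    (μ : Measure Ω) [IsProbabilityMeasure μ] (n : ℕ) (hn : 0 < n)
    (X : Fin n → Ω → ℝ) (hmeas : ∀ i, Measurable (X i))
    (hindep : iIndepFun X μ)
    (F : ℝ → ℝ) (hF : ∀ i x, (μ {ω | X i ω ≤ x}).toReal = F x)
    (p q : Fin n → ℝ) (hp0 : ∀ i, 0 ≤ p i) (hq0 : ∀ i, 0 ≤ q i)
    (hpdec : ∀ i j : Fin n, i ≤ j → p j ≤ p i)
    (hqdec : ∀ i j : Fin n, i ≤ j → q j ≤ q i)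
    (hpsum : ∑ i : Fin n, p i = 1) (hqsum : ∑ i : Fin n, q i = 1)
    (hmaj : ∀ k : ℕ, k < n →
      ∑ i ∈ univ.filter (fun i : Fin n => (i : ℕ) < k), p i ≤
      ∑ i ∈ univ.filter (fun i : Fin n => (i : ℕ) < k), q i) :
    ∀ x : ℝ,
      (∑ i : Fin n, q i * (μ {ω | orderStat X i.rev ω ≤ x}).toReal) ≤
        (∑ i : Fin n, p i * (μ {ω | orderStat X i.rev ω ≤ x}).toReal) ∧
      (∑ i : Fin n, p i * (μ {ω | orderStat X i.rev ω ≤ x}).toReal) ≤ F x ∧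
      F x ≤ (∑ i : Fin n, p i * (μ {ω | orderStat X i ω ≤ x}).toReal) ∧
      (∑ i : Fin n, p i * (μ {ω | orderStat X i ω ≤ x}).toReal) ≤
        ∑ i : Fin n, q i * (μ {ω | orderStat X i ω ≤ x}).toReal :=
  orderStat_mixture_bounds_of_majorized_general μ n hn X hmeas F hF p q hpdec hpsum hqsum hmaj
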